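/- arXiv:2406.10631 — 4 statements merged into one kernel-verified Lean document; each statement's English description precedes it below -/
import Mathlib

section
/- Let δ, ε ∈ (0,1/2). For any x, y ∈ Δ² with x[1] ≥ 1/(1+δ) and y[1] ≥ 1/2 + ε, the duality gap of (x,y) in the game with matrix A_δ satisfies DualGap(x,y) ≥ ε. -/
open Set Matrix

/-- The 2×2 loss matrix `A_δ` with first row `(1/2+δ, 1/2)` and second row `(0, 1)`. -/
noncomputable def Adelta (δ : ℝ) : Matrix (Fin 2) (Fin 2) ℝ := !![1/2 + δ, 1/2; 0, 1]

/-- The duality gap `max_{y'∈Δ²} xᵀ A y' − min_{x'∈Δ²} x'ᵀ A y`. -/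
noncomputable def dualGap (A : Matrix (Fin 2) (Fin 2) ℝ) (x y : Fin 2 → ℝ) : ℝ :=
  sSup ((fun y' => x ⬝ᵥ A.mulVec y') '' stdSimplex ℝ (Fin 2)) -
  sInf ((fun x' => x' ⬝ᵥ A.mulVec y) '' stdSimplex ℝ (Fin 2))

/-- if `x[1] ≥ 1/(1+δ)` and `y[1] ≥ 1/2 + ε` then the duality gap of `(x,y)`
in the game `A_δ` is at least `ε`. -/
theorem Adelta_dualGap_large (δ ε : ℝ) (hδ : δ ∈ Set.Ioo (0 : ℝ) (1/2))
    (hε : ε ∈ Set.Ioo (0 : ℝ) (1/2))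
    (x y : Fin 2 → ℝ) (hx : x ∈ stdSimplex ℝ (Fin 2)) (hy : y ∈ stdSimplex ℝ (Fin 2))
    (hx1 : 1/(1+δ) ≤ x 0) (hy1 : 1/2 + ε ≤ y 0) :
    ε ≤ dualGap (Adelta δ) x y := by
  obtain ⟨hδ0, hδ1⟩ := hδ
  obtain ⟨hxnn, hxsum⟩ := hx
  obtain ⟨hynn, hysum⟩ := hy
  rw [Fin.sum_univ_two] at hxsum hysum
  have hx0 := hxnn 0
  have hx1' := hxnn 1
  have hy0 := hynn 0
  have hy1' := hynn 1
  have he1 : (![0,1] : Fin 2 → ℝ) ∈ stdSimplex ℝ (Fin 2) := by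
    refine ⟨fun i => ?_, by simp [Fin.sum_univ_two]⟩
    fin_cases i <;> norm_num
  have hsup : 1 - x 0 / 2 ≤
      sSup ((fun y' => x ⬝ᵥ (Adelta δ).mulVec y') '' stdSimplex ℝ (Fin 2)) := by
    have hval : x ⬝ᵥ (Adelta δ).mulVec ![0,1] = 1 - x 0 / 2 := by
      simp [Adelta, Matrix.mulVec, dotProduct, Fin.sum_univ_two]
      linarith
    have hbdd : BddAbove ((fun y' => x ⬝ᵥ (Adelta δ).mulVec y') '' stdSimplex ℝ (Fin 2)) := by
      refine ⟨2, ?_⟩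
      rintro z ⟨y', hy', rfl⟩
      obtain ⟨hnn, hsum⟩ := hy'
      rw [Fin.sum_univ_two] at hsum
      have h0 := hnn 0
      have h1 := hnn 1
      simp [Adelta, Matrix.mulVec, dotProduct, Fin.sum_univ_two]
      nlinarith [mul_nonneg hx0 h0, mul_nonneg hx0 h1, mul_nonneg hx1' h0,
        mul_nonneg hx1' h1]
    calc 1 - x 0 / 2 = x ⬝ᵥ (Adelta δ).mulVec ![0,1] := hval.symm
      _ ≤ _ := le_csSup hbdd ⟨![0,1], he1, rfl⟩
  have hinf : sInf ((fun x' => x' ⬝ᵥ (Adelta δ).mulVec y) '' stdSimplex ℝ (Fin 2))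
      ≤ 1 - y 0 := by
    have hval : (![0,1] : Fin 2 → ℝ) ⬝ᵥ (Adelta δ).mulVec y = 1 - y 0 := by
      simp [Adelta, Matrix.mulVec, dotProduct, Fin.sum_univ_two]
      linarith
    have hbdd : BddBelow ((fun x' => x' ⬝ᵥ (Adelta δ).mulVec y) '' stdSimplex ℝ (Fin 2)) := by
      refine ⟨0, ?_⟩
      rintro z ⟨x', hx', rfl⟩
      obtain ⟨hnn, _⟩ := hx'
      have h0 := hnn 0
      have h1 := hnn 1
      simp [Adelta, Matrix.mulVec, dotProduct, Fin.sum_univ_two]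
      nlinarith [mul_nonneg h0 hy0, mul_nonneg h0 hy1', mul_nonneg h1 hy1']
    calc sInf _ ≤ (![0,1] : Fin 2 → ℝ) ⬝ᵥ (Adelta δ).mulVec y :=
          csInf_le hbdd ⟨![0,1], he1, rfl⟩
      _ = 1 - y 0 := hval
  have hxle : x 0 ≤ 1 := by linarith
  unfold dualGap
  linarith [hε.1, hε.2]
end

section
/- Let A ∈ [0,1]^{2×2}, n ≥ 1, η > 0, and define Â ∈ [0,1]^{2n×2n} by Â_{ij} := A_{φ(i),φ(j)}, where φ(i) = 1 if i ≤ n and φ(i) = 2 if i > n. Let (x^t, y^t)_{t≥1} be the OFTRL iterates with the negative entropy regularizer R(x) = Σ_i x_i log x_i and step size η in the 2×2 zero-sum game A, and let (x̂^t, ŷ^t)_{t≥1} be the OFTRL iterates with the negative entropy regularizer and the same step size η in the 2n×2n zero-sum game Â. Then for every t ≥ 1 and all indices i, j ∈ {1,…,2n}: x̂^t_i = x^t[φ(i)]/n and ŷ^t_j = y^t[φ(j)]/n; in particular Σ_{i=1}^{n} x̂^t_i = x^t[1] and Σ_{j=1}^{n} ŷ^t_j = y^t[1]. -/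
open Set Matrix Finset

noncomputable section

/-- The negative entropy regularizer on `ℝ^d`. -/
def negEntropy {d : ℕ} (z : Fin d → ℝ) : ℝ := ∑ i, z i * Real.log (z i)

/-- The x-player's loss vectors `ℓ_x^t = B y^t` (with `ℓ_x^0 = 0`). -/
def lossX {m k : ℕ} (B : Matrix (Fin m) (Fin k) ℝ) (y : ℕ → Fin k → ℝ) (t : ℕ) :
    Fin m → ℝ :=
  if t = 0 then 0 else B.mulVec (y t)

/-- The y-player's loss vectors `ℓ_y^t = −Bᵀ x^t` (with `ℓ_y^0 = 0`). -/
def lossY {m k : ℕ} (B : Matrix (Fin m) (Fin k) ℝ) (x : ℕ → Fin m → ℝ) (t : ℕ) :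
    Fin k → ℝ :=
  if t = 0 then 0 else -(Bᵀ.mulVec (x t))

/-- `p` is the unique minimizer over the simplex of `⟨·, c⟩ + (1/η) R(·)`. -/
def IsArgminIter {d : ℕ} (η : ℝ) (R : (Fin d → ℝ) → ℝ) (c : Fin d → ℝ)
    (p : Fin d → ℝ) : Prop :=
  p ∈ stdSimplex ℝ (Fin d) ∧
  ∀ q ∈ stdSimplex ℝ (Fin d), q ≠ p →
    (∑ i, p i * c i) + (1 / η) * R p < (∑ i, q i * c i) + (1 / η) * R q

/-- OFTRL dynamics with regularizers `Rm`, `Rk` and step size `η` in the zero-sum game `B`: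
at each `t ≥ 1` the iterates minimize `⟨·, Σ_{τ=1}^{t−1} ℓ^τ + ℓ^{t−1}⟩ + (1/η) R(·)`. -/
def IsOFTRLGame {m k : ℕ} (η : ℝ) (Rm : (Fin m → ℝ) → ℝ) (Rk : (Fin k → ℝ) → ℝ)
    (B : Matrix (Fin m) (Fin k) ℝ) (x : ℕ → Fin m → ℝ) (y : ℕ → Fin k → ℝ) : Prop :=
  ∀ t : ℕ, 1 ≤ t →
    IsArgminIter η Rm
      (fun i => (∑ τ ∈ Finset.range t, lossX B y τ i) + lossX B y (t - 1) i) (x t) ∧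
    IsArgminIter η Rk
      (fun j => (∑ τ ∈ Finset.range t, lossY B x τ j) + lossY B x (t - 1) j) (y t)

/-- `φ(i) = 1` if `i ≤ n`, `φ(i) = 2` if `i > n` (0-indexed as `0` and `1`). -/
def phiDup (n : ℕ) (i : Fin (2 * n)) : Fin 2 := if (i : ℕ) < n then 0 else 1


section AuxDuplication

lemma card_filter_lt (n : ℕ) :
    (Finset.univ.filter fun i : Fin (2 * n) => (i : ℕ) < n).card = n := by
  have h : (Finset.univ.filter fun i : Fin (2 * n) => (i : ℕ) < n)
      = Finset.univ.map (Fin.castLEEmb (by omega : n ≤ 2 * n)) := by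
    ext i
    simp only [Finset.mem_filter, Finset.mem_univ, true_and, Finset.mem_map]
    constructor
    · intro hi
      exact ⟨⟨i, hi⟩, Fin.ext rfl⟩
    · rintro ⟨a, rfl⟩
      simp
  rw [h, Finset.card_map, Finset.card_univ, Fintype.card_fin]

lemma card_filter_ge (n : ℕ) :
    (Finset.univ.filter fun i : Fin (2 * n) => ¬ (i : ℕ) < n).card = n := by
  have h := Finset.card_filter_add_card_filter_not
      (s := (Finset.univ : Finset (Fin (2 * n)))) (p := fun i : Fin (2 * n) => (i : ℕ) < n)
  rw [card_filter_lt] at h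
  simp only [Finset.card_univ, Fintype.card_fin] at h
  omega

lemma sum_phiDup (n : ℕ) (F : Fin 2 → ℝ) :
    ∑ i : Fin (2 * n), F (phiDup n i) = n * F 0 + n * F 1 := by
  classical
  rw [← Finset.sum_filter_add_sum_filter_not Finset.univ (fun i : Fin (2 * n) => (i : ℕ) < n)]
  have h1 : ∀ i ∈ Finset.univ.filter (fun i : Fin (2 * n) => (i : ℕ) < n),
      F (phiDup n i) = F 0 := by
    intro i hi
    rw [Finset.mem_filter] at hi
    simp [phiDup, hi.2]
  have h2 : ∀ i ∈ Finset.univ.filter (fun i : Fin (2 * n) => ¬ (i : ℕ) < n),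
      F (phiDup n i) = F 1 := by
    intro i hi
    rw [Finset.mem_filter] at hi
    simp [phiDup, hi.2]
  rw [Finset.sum_congr rfl h1, Finset.sum_congr rfl h2, Finset.sum_const,
    Finset.sum_const, card_filter_lt, card_filter_ge, nsmul_eq_mul, nsmul_eq_mul]

/-- The uniform lift of a distribution on `Fin 2` to `Fin (2*n)`. -/
def liftV (n : ℕ) (q : Fin 2 → ℝ) : Fin (2 * n) → ℝ := fun i => q (phiDup n i) / n

lemma mem_stdSimplex_iff' {d : ℕ} (p : Fin d → ℝ) :
    p ∈ stdSimplex ℝ (Fin d) ↔ (∀ i, 0 ≤ p i) ∧ ∑ i, p i = 1 := Iff.rfl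

lemma sum_liftV (n : ℕ) (hn : 1 ≤ n) (q : Fin 2 → ℝ) :
    ∑ i : Fin (2 * n), liftV n q i = ∑ a, q a := by
  have hn0 : (n : ℝ) ≠ 0 := Nat.cast_ne_zero.mpr (by omega)
  have h := sum_phiDup n (fun a => q a / n)
  simp only [liftV]
  rw [h, Fin.sum_univ_two]
  field_simp

lemma liftV_mem (n : ℕ) (hn : 1 ≤ n) {q : Fin 2 → ℝ} (hq : q ∈ stdSimplex ℝ (Fin 2)) :
    liftV n q ∈ stdSimplex ℝ (Fin (2 * n)) := by
  rw [mem_stdSimplex_iff'] at hq ⊢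
  have hn' : (0 : ℝ) < n := by exact_mod_cast Nat.lt_of_lt_of_le Nat.zero_lt_one hn
  refine ⟨fun i => div_nonneg (hq.1 _) hn'.le, ?_⟩
  rw [sum_liftV n hn, hq.2]

lemma sum_liftV_mul (n : ℕ) (hn : 1 ≤ n) (q c : Fin 2 → ℝ) :
    ∑ i : Fin (2 * n), liftV n q i * c (phiDup n i) = ∑ a, q a * c a := by
  have hn0 : (n : ℝ) ≠ 0 := Nat.cast_ne_zero.mpr (by omega)
  have h := sum_phiDup n (fun a => q a / n * c a)
  simp only [liftV]
  rw [h, Fin.sum_univ_two]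
  field_simp

lemma negEntropy_liftV (n : ℕ) (hn : 1 ≤ n) {q : Fin 2 → ℝ} (hsum : ∑ a, q a = 1) :
    negEntropy (liftV n q) = negEntropy q - Real.log n := by
  have hn0 : (n : ℝ) ≠ 0 := Nat.cast_ne_zero.mpr (by omega)
  have key : ∀ a : Fin 2, (n : ℝ) * (q a / n * Real.log (q a / n))
      = q a * Real.log (q a) - q a * Real.log n := by
    intro a
    rcases eq_or_ne (q a) 0 with h | h
    · simp [h]
    · rw [Real.log_div h hn0]
      field_simp
  have h0 : negEntropy (liftV n q)
      = ∑ i : Fin (2 * n), (fun a => q a / (n : ℝ) * Real.log (q a / n)) (phiDup n i) := rfl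
  have h1 := sum_phiDup n (fun a => q a / (n : ℝ) * Real.log (q a / n))
  rw [h0, h1, key 0, key 1]
  unfold negEntropy
  rw [Fin.sum_univ_two] at hsum ⊢
  linear_combination (-Real.log n) * hsum

lemma key_argmin (n : ℕ) (hn : 1 ≤ n) (η : ℝ) (hη : 0 < η)
    (c p : Fin 2 → ℝ) (phat : Fin (2 * n) → ℝ)
    (hp : IsArgminIter η negEntropy c p)
    (hphat : IsArgminIter η negEntropy (fun i => c (phiDup n i)) phat) :
    ∀ i, phat i = p (phiDup n i) / n := by
  have hn0 : (n : ℝ) ≠ 0 := Nat.cast_ne_zero.mpr (by omega)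
  have obj_lift : ∀ q : Fin 2 → ℝ, (∑ a, q a = 1) →
      (∑ i, liftV n q i * (fun i => c (phiDup n i)) i) + (1 / η) * negEntropy (liftV n q)
        = ((∑ a, q a * c a) + (1 / η) * negEntropy q) - (1 / η) * Real.log n := by
    intro q hq
    have h1 : (∑ i, liftV n q i * (fun i => c (phiDup n i)) i)
        = ∑ a, q a * c a := sum_liftV_mul n hn q c
    rw [h1, negEntropy_liftV n hn hq]
    ring
  have hconst : ∀ i i' : Fin (2 * n), phiDup n i = phiDup n i' → phat i = phat i' := by
    intro i i' hii
    set σ := Equiv.swap i i' with hσ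
    have hφ : ∀ j, phiDup n (σ j) = phiDup n j := by
      intro j
      rcases eq_or_ne j i with rfl | h1
      · rw [hσ, Equiv.swap_apply_left, ← hii]
      rcases eq_or_ne j i' with rfl | h2
      · rw [hσ, Equiv.swap_apply_right, hii]
      · rw [hσ, Equiv.swap_apply_of_ne_of_ne h1 h2]
    have hqmem : (phat ∘ σ) ∈ stdSimplex ℝ (Fin (2 * n)) := by
      rw [mem_stdSimplex_iff']
      refine ⟨fun j => hphat.1.1 _, ?_⟩
      have h2 : ∑ j, phat (σ j) = ∑ j, phat j := Equiv.sum_comp σ phat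
      rw [show (∑ j, (phat ∘ σ) j) = ∑ j, phat (σ j) from rfl, h2]
      exact hphat.1.2
    have heq : phat ∘ σ = phat := by
      by_contra h
      have hlt := hphat.2 (phat ∘ σ) hqmem h
      have e1 : (∑ j, (phat ∘ σ) j * (fun i => c (phiDup n i)) j)
          = ∑ j, phat j * (fun i => c (phiDup n i)) j := by
        simp only [Function.comp]
        calc ∑ j, phat (σ j) * c (phiDup n j)
            = ∑ j, phat (σ j) * c (phiDup n (σ j)) :=
              Finset.sum_congr rfl (fun j _ => by rw [hφ j])
          _ = ∑ j, phat j * c (phiDup n j) :=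
              Equiv.sum_comp σ (fun j => phat j * c (phiDup n j))
      have e2 : negEntropy (phat ∘ σ) = negEntropy phat :=
        Equiv.sum_comp σ (fun j => phat j * Real.log (phat j))
      rw [e1, e2] at hlt
      exact lt_irrefl _ hlt
    have h3 := congrFun heq i'
    simpa [hσ, Equiv.swap_apply_right] using h3
  have h0lt : (0 : ℕ) < 2 * n := by omega
  have hnlt : n < 2 * n := by omega
  set i0 : Fin (2 * n) := ⟨0, h0lt⟩ with hi0
  set i1 : Fin (2 * n) := ⟨n, hnlt⟩ with hi1
  have hφ0 : phiDup n i0 = 0 := if_pos (by simp only [hi0]; omega)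
  have hφ1 : phiDup n i1 = 1 := if_neg (by simp only [hi1]; omega)
  set s : Fin 2 → ℝ := fun a => (n : ℝ) * phat (![i0, i1] a) with hs
  have hφemb : ∀ a : Fin 2, phiDup n (![i0, i1] a) = a := by
    rw [Fin.forall_fin_two]
    constructor <;> simp [hφ0, hφ1]
  have hlift : phat = liftV n s := by
    funext i
    have h := hconst i (![i0, i1] (phiDup n i)) (by rw [hφemb])
    rw [h]
    simp only [liftV, hs]
    rw [mul_div_cancel_left₀ _ hn0]
  have hssum : ∑ a, s a = 1 := by
    have h1 : ∑ i, phat i = 1 := hphat.1.2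
    rw [hlift, sum_liftV n hn] at h1
    exact h1
  have hsmem : s ∈ stdSimplex ℝ (Fin 2) := by
    rw [mem_stdSimplex_iff']
    exact ⟨fun a => mul_nonneg (by positivity) (hphat.1.1 _), hssum⟩
  have hsarg : IsArgminIter η negEntropy c s := by
    refine ⟨hsmem, ?_⟩
    intro q hq hqs
    have hqsum : ∑ a, q a = 1 := ((mem_stdSimplex_iff' q).mp hq).2
    have hne : liftV n q ≠ phat := by
      rw [hlift]
      intro h
      apply hqs
      funext a
      have h2 := congrFun h (![i0, i1] a)
      simp only [liftV, hφemb] at h2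
      field_simp at h2
      exact h2
    have hlt := hphat.2 (liftV n q) (liftV_mem n hn hq) hne
    rw [hlift] at hlt
    rw [obj_lift s hssum, obj_lift q hqsum] at hlt
    linarith
  have hsp : s = p := by
    by_contra h
    have h1 := hp.2 s hsmem h
    have h2 := hsarg.2 p hp.1 (Ne.symm h)
    linarith
  intro i
  rw [hlift, hsp]
  rfl

lemma lossX_lift (n : ℕ) (hn : 1 ≤ n)
    (A : Matrix (Fin 2) (Fin 2) ℝ) (Ahat : Matrix (Fin (2 * n)) (Fin (2 * n)) ℝ)
    (hAhat : ∀ i j, Ahat i j = A (phiDup n i) (phiDup n j))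
    (y : ℕ → Fin 2 → ℝ) (yhat : ℕ → Fin (2 * n) → ℝ) (τ : ℕ)
    (hy : τ ≠ 0 → ∀ j, yhat τ j = y τ (phiDup n j) / n) :
    ∀ i, lossX Ahat yhat τ i = lossX A y τ (phiDup n i) := by
  intro i
  rcases eq_or_ne τ 0 with rfl | hτ
  · simp [lossX]
  · have hn0 : (n : ℝ) ≠ 0 := Nat.cast_ne_zero.mpr (by omega)
    simp only [lossX, if_neg hτ, Matrix.mulVec, dotProduct]
    have h := sum_phiDup n (fun b => A (phiDup n i) b * (y τ b / n))
    calc ∑ j, Ahat i j * yhat τ j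
        = ∑ j, (fun b => A (phiDup n i) b * (y τ b / n)) (phiDup n j) :=
          Finset.sum_congr rfl fun j _ => by rw [hAhat, hy hτ]
      _ = n * (A (phiDup n i) 0 * (y τ 0 / n)) + n * (A (phiDup n i) 1 * (y τ 1 / n)) := h
      _ = ∑ b, A (phiDup n i) b * y τ b := by
          rw [Fin.sum_univ_two]; field_simp

lemma lossY_lift (n : ℕ) (hn : 1 ≤ n)
    (A : Matrix (Fin 2) (Fin 2) ℝ) (Ahat : Matrix (Fin (2 * n)) (Fin (2 * n)) ℝ)
    (hAhat : ∀ i j, Ahat i j = A (phiDup n i) (phiDup n j))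
    (x : ℕ → Fin 2 → ℝ) (xhat : ℕ → Fin (2 * n) → ℝ) (τ : ℕ)
    (hx : τ ≠ 0 → ∀ i, xhat τ i = x τ (phiDup n i) / n) :
    ∀ j, lossY Ahat xhat τ j = lossY A x τ (phiDup n j) := by
  intro j
  rcases eq_or_ne τ 0 with rfl | hτ
  · simp [lossY]
  · have hn0 : (n : ℝ) ≠ 0 := Nat.cast_ne_zero.mpr (by omega)
    simp only [lossY, if_neg hτ, Matrix.mulVec, dotProduct, Pi.neg_apply,
      Matrix.transpose_apply, neg_inj]
    have h := sum_phiDup n (fun a => A a (phiDup n j) * (x τ a / n))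
    calc ∑ i, Ahat i j * xhat τ i
        = ∑ i, (fun a => A a (phiDup n j) * (x τ a / n)) (phiDup n i) :=
          Finset.sum_congr rfl fun i _ => by rw [hAhat, hx hτ]
      _ = n * (A 0 (phiDup n j) * (x τ 0 / n)) + n * (A 1 (phiDup n j) * (x τ 1 / n)) := h
      _ = ∑ a, A a (phiDup n j) * x τ a := by
          rw [Fin.sum_univ_two]; field_simp

end AuxDuplication

/-- for the negative entropy regularizer, the OFTRL dynamics on the
duplicated game `Â_{ij} = A_{φ(i)φ(j)}` are equivalent to those on `A`:
`x̂^t_i = x^t[φ(i)]/n` and `ŷ^t_j = y^t[φ(j)]/n`. -/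
theorem oftrl_entropy_duplication
    (n : ℕ) (hn : 1 ≤ n) (η : ℝ) (hη : 0 < η)
    (A : Matrix (Fin 2) (Fin 2) ℝ) (hA : ∀ i j, A i j ∈ Set.Icc (0 : ℝ) 1)
    (Ahat : Matrix (Fin (2 * n)) (Fin (2 * n)) ℝ)
    (hAhat : ∀ i j, Ahat i j = A (phiDup n i) (phiDup n j))
    (x y : ℕ → Fin 2 → ℝ)
    (hxy : IsOFTRLGame η negEntropy negEntropy A x y)
    (xhat yhat : ℕ → Fin (2 * n) → ℝ)
    (hhat : IsOFTRLGame η negEntropy negEntropy Ahat xhat yhat) :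
    ∀ t : ℕ, 1 ≤ t →
      (∀ i : Fin (2 * n), xhat t i = x t (phiDup n i) / n) ∧
      (∀ j : Fin (2 * n), yhat t j = y t (phiDup n j) / n) ∧
      (∑ i ∈ Finset.univ.filter (fun i : Fin (2 * n) => (i : ℕ) < n), xhat t i) = x t 0 ∧
      (∑ j ∈ Finset.univ.filter (fun j : Fin (2 * n) => (j : ℕ) < n), yhat t j) = y t 0 := by
  have hn0 : (n : ℝ) ≠ 0 := Nat.cast_ne_zero.mpr (by omega)
  have main : ∀ t : ℕ, 1 ≤ t →
      (∀ i, xhat t i = x t (phiDup n i) / n) ∧ (∀ j, yhat t j = y t (phiDup n j) / n) := by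
    intro t
    induction t using Nat.strong_induction_on with
    | _ t IH =>
      intro ht
      have hlx : ∀ τ, τ < t → ∀ i, lossX Ahat yhat τ i = lossX A y τ (phiDup n i) := by
        intro τ hτ
        exact lossX_lift n hn A Ahat hAhat y yhat τ
          (fun hτ0 => (IH τ hτ (by omega)).2)
      have hly : ∀ τ, τ < t → ∀ j, lossY Ahat xhat τ j = lossY A x τ (phiDup n j) := by
        intro τ hτ
        exact lossY_lift n hn A Ahat hAhat x xhat τ
          (fun hτ0 => (IH τ hτ (by omega)).1)
      have hcx : (fun i => (∑ τ ∈ Finset.range t, lossX Ahat yhat τ i) + lossX Ahat yhat (t - 1) i)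
          = fun i => (fun a => (∑ τ ∈ Finset.range t, lossX A y τ a) + lossX A y (t - 1) a)
              (phiDup n i) := by
        funext i
        simp only
        rw [Finset.sum_congr rfl (fun τ hτ => hlx τ (Finset.mem_range.mp hτ) i),
          hlx (t - 1) (by omega) i]
      have hcy : (fun j => (∑ τ ∈ Finset.range t, lossY Ahat xhat τ j) + lossY Ahat xhat (t - 1) j)
          = fun j => (fun a => (∑ τ ∈ Finset.range t, lossY A x τ a) + lossY A x (t - 1) a)
              (phiDup n j) := by
        funext j
        simp only
        rw [Finset.sum_congr rfl (fun τ hτ => hly τ (Finset.mem_range.mp hτ) j),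
          hly (t - 1) (by omega) j]
      have hx1 := (hhat t ht).1
      have hy1 := (hhat t ht).2
      rw [hcx] at hx1
      rw [hcy] at hy1
      exact ⟨key_argmin n hn η hη _ (x t) (xhat t) (hxy t ht).1 hx1,
        key_argmin n hn η hη _ (y t) (yhat t) (hxy t ht).2 hy1⟩
  intro t ht
  obtain ⟨hx, hy⟩ := main t ht
  refine ⟨hx, hy, ?_, ?_⟩
  · have h1 : ∀ i ∈ Finset.univ.filter (fun i : Fin (2 * n) => (i : ℕ) < n),
        xhat t i = x t 0 / n := by
      intro i hi
      rw [Finset.mem_filter] at hi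
      rw [hx i]
      simp [phiDup, hi.2]
    rw [Finset.sum_congr rfl h1, Finset.sum_const, card_filter_lt, nsmul_eq_mul]
    field_simp
  · have h1 : ∀ j ∈ Finset.univ.filter (fun j : Fin (2 * n) => (j : ℕ) < n),
        yhat t j = y t 0 / n := by
      intro j hj
      rw [Finset.mem_filter] at hj
      rw [hy j]
      simp [phiDup, hj.2]
    rw [Finset.sum_congr rfl h1, Finset.sum_const, card_filter_lt, nsmul_eq_mul]
    field_simp


end
end

section
/- Let F be the OFTRL response function of the log barrier regularizer, i.e., F(E) is the unique minimizer over (0,1) of x ↦ x·E − log x − log(1−x), and suppose F is L-Lipschitz for a constant L > 0. Let c1 := 1/2 − F(1/(20L)) = sqrt(1/4 + 400L²) − 20L > 0. Then there exist constants δ', c2 > 0 and c3 ∈ (0,1/2] such that for every 0 < δ ≤ δ' and every E ∈ ℝ: (1) if F(E) ≥ 1/(1+δ) then F(E − c1²/(30Lδ)) ≥ (1+c3)/(1+c3+δ); and (2) if F(E) ≥ 1/(2(1+δ)) then F(E − c3·c1²/(120L) + δ/(4L)) ≥ 1/2 + c2. -/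
open Set Real

/-!
At an interior minimiser the derivative of `x ↦ x E + R x` vanishes, so `F` inverts the strictly
decreasing map `x ↦ 1/x − 1/(1 − x) = −R' x`: hence `t ≤ F E ↔ E ≤ −R' t`, and `F` is antitone.
At points `a / (a + b)` this map equals `b/a − a/b`, which turns both items into elementary
inequalities; for item (2), `c2 := F (−K/2) − 1/2`, where `−K` is the shift applied to `E`.
-/

noncomputable def logBarrierObjective (E x : ℝ) : ℝ := x * E + (-Real.log x - Real.log (1 - x))

noncomputable def logBarrierSlope (x : ℝ) : ℝ := 1 / x - 1 / (1 - x)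

lemma hasDerivAt_logBarrierObjective (E : ℝ) {x : ℝ} (hx : x ∈ Ioo (0 : ℝ) 1) :
    HasDerivAt (logBarrierObjective E) (E - logBarrierSlope x) x := by
  have hsub : HasDerivAt (fun y : ℝ => 1 - y) (-1) x := by
    simpa using (hasDerivAt_id x).const_sub 1
  have hderiv := ((hasDerivAt_id' x).mul_const E).fun_add
    ((Real.hasDerivAt_log hx.1.ne').fun_neg.fun_sub (hsub.log (by linarith [hx.2])))
  refine hderiv.congr_deriv ?_
  simp only [logBarrierSlope]
  ring

lemma logBarrierSlope_eq_of_isMinOn {E x : ℝ} (hx : x ∈ Ioo (0 : ℝ) 1)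
    (hmin : IsMinOn (logBarrierObjective E) (Ioo 0 1) x) : logBarrierSlope x = E :=
  (sub_eq_zero.1 ((hmin.isLocalMin (Ioo_mem_nhds hx.1 hx.2)).hasDerivAt_eq_zero
    (hasDerivAt_logBarrierObjective E hx))).symm

lemma strictAntiOn_logBarrierSlope : StrictAntiOn logBarrierSlope (Ioo 0 1) := by
  intro a ha b hb hab
  have h1 : 1 / b < 1 / a := one_div_lt_one_div_of_lt ha.1 hab
  have h2 : 1 / (1 - a) < 1 / (1 - b) := one_div_lt_one_div_of_lt (by linarith [hb.2]) (by linarith)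
  simp only [logBarrierSlope]
  linarith

lemma logBarrierSlope_div_add {a b : ℝ} (ha : 0 < a) (hb : 0 < b) :
    logBarrierSlope (a / (a + b)) = b / a - a / b := by
  have hab : 1 - a / (a + b) = b / (a + b) := by field_simp; ring
  simp only [logBarrierSlope, hab, one_div_div]
  field_simp
  ring

lemma div_add_mem_Ioo {a b : ℝ} (ha : 0 < a) (hb : 0 < b) : a / (a + b) ∈ Ioo (0 : ℝ) 1 :=
  ⟨by positivity, (div_lt_one (by positivity)).2 (by linarith)⟩

lemma logBarrierSlope_half_add_sub_sqrt {a : ℝ} (ha : 0 < a) :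
    1 / 2 + a - √(1 / 4 + a ^ 2) ∈ Ioo (0 : ℝ) 1 ∧
      logBarrierSlope (1 / 2 + a - √(1 / 4 + a ^ 2)) = 1 / a := by
  set s := √(1 / 4 + a ^ 2)
  have hs2 : s ^ 2 = 1 / 4 + a ^ 2 := Real.sq_sqrt (by positivity)
  have hsa : a < s := by nlinarith [Real.sqrt_nonneg (1 / 4 + a ^ 2)]
  have hsa' : s < 1 / 2 + a := by nlinarith
  refine ⟨⟨by linarith, by linarith⟩, ?_⟩
  have h1 : 1 / 2 + a - s ≠ 0 := by linarith
  have h2 : 1 / 2 - a + s ≠ 0 := by linarith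
  simp only [logBarrierSlope, show 1 - (1 / 2 + a - s) = 1 / 2 - a + s by ring]
  rw [div_sub_div _ _ h1 h2, div_eq_div_iff (mul_ne_zero h1 h2) ha.ne']
  linear_combination hs2

section response

variable {F : ℝ → ℝ} (hmem : ∀ E, F E ∈ Ioo (0 : ℝ) 1) (hslope : ∀ E, logBarrierSlope (F E) = E)
include hmem hslope

lemma le_response_iff {E t : ℝ} (ht : t ∈ Ioo (0 : ℝ) 1) : t ≤ F E ↔ E ≤ logBarrierSlope t := by
  rw [← strictAntiOn_logBarrierSlope.le_iff_ge (hmem E) ht, hslope]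

lemma lt_response_iff {E t : ℝ} (ht : t ∈ Ioo (0 : ℝ) 1) : t < F E ↔ E < logBarrierSlope t := by
  rw [← strictAntiOn_logBarrierSlope.lt_iff_gt (hmem E) ht, hslope]

lemma response_eq_of_logBarrierSlope_eq {E t : ℝ} (ht : t ∈ Ioo (0 : ℝ) 1)
    (h : logBarrierSlope t = E) : F E = t :=
  strictAntiOn_logBarrierSlope.injOn (hmem E) ht (by rw [hslope, h])

lemma antitone_response : Antitone F := fun E E' hEE' =>
  (le_response_iff hmem hslope (hmem E')).2 (by rw [hslope]; exact hEE')

lemma div_add_le_response_sub {E δ c C : ℝ} (hδ : 0 < δ) (hδ1 : δ ≤ 1) (hc : 0 < c)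
    (hcC : 2 * c ≤ C) (h : 1 / (1 + δ) ≤ F E) : (1 + c) / (1 + c + δ) ≤ F (E - C / δ) := by
  rw [le_response_iff hmem hslope (div_add_mem_Ioo one_pos hδ),
    logBarrierSlope_div_add one_pos hδ, div_one] at h
  rw [le_response_iff hmem hslope (div_add_mem_Ioo (by positivity) hδ),
    logBarrierSlope_div_add (by positivity) hδ]
  have hgain : δ - δ / (1 + c) ≤ c := by
    rw [show δ - δ / (1 + c) = δ * c / (1 + c) by field_simp; ring, div_le_iff₀ (by positivity)]
    nlinarith
  have hslack : C - c ≤ (C - c) / δ := le_div_self (by linarith) hδ hδ1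
  rw [sub_div] at hslack
  rw [add_div]
  linarith

lemma le_of_half_div_le_response {E δ : ℝ} (hδ : 0 < δ) (h : 1 / (2 * (1 + δ)) ≤ F E) :
    E ≤ 4 * δ := by
  have hδ' : (0 : ℝ) < 1 + 2 * δ := by positivity
  rw [show 2 * (1 + δ) = 1 + (1 + 2 * δ) by ring, le_response_iff hmem hslope
    (div_add_mem_Ioo one_pos hδ'), logBarrierSlope_div_add one_pos hδ', div_one] at h
  have : 1 - 2 * δ ≤ 1 / (1 + 2 * δ) := by
    rw [le_div_iff₀ hδ']
    nlinarith
  linarith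

end response

theorem logBarrier_main_assumption_general
    (F : ℝ → ℝ)
    (hF : ∀ E : ℝ, F E ∈ Set.Ioo (0 : ℝ) 1 ∧
      ∀ z ∈ Set.Ioo (0 : ℝ) 1, z ≠ F E →
        F E * E + (-Real.log (F E) - Real.log (1 - F E)) <
          z * E + (-Real.log z - Real.log (1 - z)))
    (L : ℝ) (hL : 0 < L) :
    (1 / 2 - F (1 / (20 * L)) = Real.sqrt (1 / 4 + 400 * L ^ 2) - 20 * L) ∧
    (0 < 1 / 2 - F (1 / (20 * L))) ∧
    ∃ δ' c2 c3 : ℝ, 0 < δ' ∧ 0 < c2 ∧ c3 ∈ Set.Ioc (0 : ℝ) (1 / 2) ∧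
      ∀ δ : ℝ, 0 < δ → δ ≤ δ' → ∀ E : ℝ,
        (1 / (1 + δ) ≤ F E →
          (1 + c3) / (1 + c3 + δ) ≤
            F (E - (1 / 2 - F (1 / (20 * L))) ^ 2 / (30 * L * δ))) ∧
        (1 / (2 * (1 + δ)) ≤ F E →
          1 / 2 + c2 ≤
            F (E - c3 * (1 / 2 - F (1 / (20 * L))) ^ 2 / (120 * L) + δ / (4 * L))) := by
  have hmem : ∀ E, F E ∈ Ioo (0 : ℝ) 1 := fun E => (hF E).1
  have hslope : ∀ E, logBarrierSlope (F E) = E := fun E =>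
    logBarrierSlope_eq_of_isMinOn (hF E).1 <| isMinOn_iff.2 fun z hz =>
      (eq_or_ne z (F E)).elim (fun h => h ▸ le_rfl) fun h => ((hF E).2 z hz h).le
  obtain ⟨hx, hxslope⟩ := logBarrierSlope_half_add_sub_sqrt (by positivity : 0 < 20 * L)
  have hc1 : 1 / 2 - F (1 / (20 * L)) = √(1 / 4 + 400 * L ^ 2) - 20 * L := by
    rw [response_eq_of_logBarrierSlope_eq hmem hslope hx hxslope]
    ring_nf
  have hc1pos : 0 < 1 / 2 - F (1 / (20 * L)) := by
    rw [hc1, sub_pos, lt_sqrt (by positivity)]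
    nlinarith
  refine ⟨hc1, hc1pos, ?_⟩
  set c1 := 1 / 2 - F (1 / (20 * L))
  set C := c1 ^ 2 / (30 * L)
  set c3 := min (1 / 2) (C / 2)
  have hc3 : 0 < c3 := lt_min one_half_pos (by positivity)
  set K := c3 * c1 ^ 2 / (120 * L)
  have hK : 0 < K := by positivity
  refine ⟨min 1 (K / 2 / (4 + 1 / (4 * L))), F (-(K / 2)) - 1 / 2, c3, by positivity, ?_,
    ⟨hc3, min_le_left _ _⟩, fun δ hδ hδδ' E => ⟨fun h => ?_, fun h => ?_⟩⟩
  · rw [sub_pos, lt_response_iff hmem hslope ⟨one_half_pos, one_half_lt_one⟩]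
    norm_num [logBarrierSlope]
    positivity
  · rw [← div_div]
    exact div_add_le_response_sub hmem hslope hδ (hδδ'.trans (min_le_left _ _)) hc3
      (by linarith [min_le_right (1 / 2) (C / 2)]) h
  · rw [add_sub_cancel]
    apply antitone_response hmem hslope
    have hE := le_of_half_div_le_response hmem hslope hδ h
    have hδK : δ * (4 + 1 / (4 * L)) ≤ K / 2 :=
      (le_div_iff₀ (by positivity)).1 (hδδ'.trans (min_le_right _ _))
    rw [mul_add, mul_one_div] at hδK
    linarith

/-- the main assumption holds for the log barrier regularizer. Here `F E` is
the unique minimizer over `(0,1)` of `x ↦ x·E − log x − log(1−x)`, assumed `L`-Lipschitz.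
Then `c1 := 1/2 − F(1/(20L)) = sqrt(1/4 + 400L²) − 20L > 0`, and there exist `δ', c2 > 0`
and `c3 ∈ (0,1/2]` making items (1) and (2) of the main assumption hold. -/
theorem logBarrier_main_assumption
    (F : ℝ → ℝ)
    (hF : ∀ E : ℝ, F E ∈ Set.Ioo (0 : ℝ) 1 ∧
      ∀ z ∈ Set.Ioo (0 : ℝ) 1, z ≠ F E →
        F E * E + (-Real.log (F E) - Real.log (1 - F E)) <
          z * E + (-Real.log z - Real.log (1 - z)))
    (L : ℝ) (hL : 0 < L)
    (hLip : ∀ a b : ℝ, |F a - F b| ≤ L * |a - b|) :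
    (1 / 2 - F (1 / (20 * L)) = Real.sqrt (1 / 4 + 400 * L ^ 2) - 20 * L) ∧
    (0 < 1 / 2 - F (1 / (20 * L))) ∧
    ∃ δ' c2 c3 : ℝ, 0 < δ' ∧ 0 < c2 ∧ c3 ∈ Set.Ioc (0 : ℝ) (1 / 2) ∧
      ∀ δ : ℝ, 0 < δ → δ ≤ δ' → ∀ E : ℝ,
        (1 / (1 + δ) ≤ F E →
          (1 + c3) / (1 + c3 + δ) ≤
            F (E - (1 / 2 - F (1 / (20 * L))) ^ 2 / (30 * L * δ))) ∧
        (1 / (2 * (1 + δ)) ≤ F E →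
          1 / 2 + c2 ≤
            F (E - c3 * (1 / 2 - F (1 / (20 * L))) ^ 2 / (120 * L) + δ / (4 * L))) :=
  logBarrier_main_assumption_general F hF L hL
end

section
/- Fix β ∈ (0,1) and let R(x) := (1 − x^β)/(1−β) + (1 − (1−x)^β)/(1−β) for x ∈ [0,1] (the one-dimensional negative Tsallis entropy regularizer), with response function F(E) := argmin_{x ∈ [0,1]} { x·E + R(x) }. Suppose F is L-Lipschitz for a constant L > 0, and let c1 := 1/2 − F(1/(20L)) > 0. Then: (a) for every x ∈ (0,1), F((β/(1−β))·(x^{β−1} − (1−x)^{β−1})) = x; and (b) with c3 := 1/2, there exist constants δ', c2 > 0 such that for every 0 < δ ≤ δ' and every E ∈ ℝ: (1) if F(E) ≥ 1/(1+δ) then F(E − c1²/(30Lδ)) ≥ (1+c3)/(1+c3+δ); and (2) if F(E) ≥ 1/(2(1+δ)) then F(E − c3·c1²/(120L) + δ/(4L)) ≥ 1/2 + c2. -/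
/-!
Write `G := -R'` (`tsallisInvResponse`); it is decreasing on `(0, 1)`, and the objective
`z ↦ z E + R z` has derivative `E - G z` there. Hence `x` minimises the objective for `E = G x`,
so `F (G x) = x`, and an interior minimiser `F E` satisfies `G (F E) = E`. Since `F` is antitone
(for any regulariser), both items reduce to bounds `G a - G y ≤ D` for the relevant `a ≤ y`.
Bernoulli's inequality gives `a^(β-1) - b^(β-1) ≤ (1-β) b^(β-1) (b/a - 1)`, which absorbs the
factor `β / (1 - β)` of `G`. Near `1/2` this makes `G` Lipschitz; near `1` it bounds
`G (1/(1+δ)) - G ((1+c)/(1+c+δ))` by `δ + c (δ/2)^(β-1)`, which is `o(1/δ)`, so the shift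
`c1² / (30 L δ)` dominates it for small `δ`.
-/

open Set Real Filter Topology

theorem rpow_sub_rpow_le_of_le {q a b : ℝ} (hq₁ : -1 ≤ q) (hq₀ : q ≤ 0) (ha : 0 < a)
    (hab : a ≤ b) : a ^ q - b ^ q ≤ -q * b ^ q * (b / a - 1) := by
  have hb : 0 < b := ha.trans_le hab
  have hsplit : a ^ q = b ^ q * (b / a) ^ (-q) := by
    rw [rpow_neg (div_pos hb ha).le, div_rpow hb.le ha.le]
    field_simp
  have hbern : (b / a) ^ (-q) ≤ 1 + -q * (b / a - 1) := by
    simpa using rpow_one_add_le_one_add_mul_self (s := b / a - 1)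
      (by linarith [(one_le_div ha).2 hab]) (neg_nonneg.2 hq₀) (by linarith)
  rw [hsplit]
  nlinarith [rpow_nonneg hb.le q]

noncomputable def tsallisReg (β x : ℝ) : ℝ :=
  (1 - x ^ β) / (1 - β) + (1 - (1 - x) ^ β) / (1 - β)

noncomputable def tsallisInvResponse (β x : ℝ) : ℝ :=
  β / (1 - β) * (x ^ (β - 1) - (1 - x) ^ (β - 1))

def IsResponseFunction (R F : ℝ → ℝ) : Prop :=
  ∀ E, F E ∈ Icc 0 1 ∧ ∀ z ∈ Icc 0 1, z ≠ F E → F E * E + R (F E) < z * E + R z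

section Tsallis

variable {β : ℝ}

theorem tsallisInvResponse_sub_le (hβ : β ∈ Ioo 0 1) {a y : ℝ} (ha : 0 < a) (hay : a ≤ y)
    (hy : y < 1) :
    tsallisInvResponse β a - tsallisInvResponse β y ≤
      (a⁻¹ - y⁻¹) + (1 - a) ^ (β - 1) * ((y - a) / (1 - y)) := by
  obtain ⟨hβ₀, hβ₁⟩ := hβ
  have hy₀ : 0 < y := ha.trans_le hay
  have h1y : 0 < 1 - y := by linarith
  have hleft := rpow_sub_rpow_le_of_le (q := β - 1) (by linarith) (by linarith) ha hay
  have hright := rpow_sub_rpow_le_of_le (q := β - 1) (by linarith) (by linarith) h1y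
    (show 1 - y ≤ 1 - a by linarith)
  have hy_rpow : y ^ (β - 1) ≤ y⁻¹ := by
    simpa [rpow_neg_one] using rpow_le_rpow_of_exponent_ge hy₀ hy.le (by linarith : -1 ≤ β - 1)
  have hya : 0 ≤ y / a - 1 := by linarith [(one_le_div ha).2 hay]
  have hyaa : 0 ≤ (1 - a) / (1 - y) - 1 := by
    linarith [(one_le_div h1y).2 (show 1 - y ≤ 1 - a by linarith)]
  have h1a : 0 ≤ (1 - a) ^ (β - 1) := rpow_nonneg (by linarith) _
  calc tsallisInvResponse β a - tsallisInvResponse β y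
      = β / (1 - β) * (a ^ (β - 1) - y ^ (β - 1)) +
          β / (1 - β) * ((1 - y) ^ (β - 1) - (1 - a) ^ (β - 1)) := by
        unfold tsallisInvResponse; ring
    _ ≤ β / (1 - β) * (-(β - 1) * y ^ (β - 1) * (y / a - 1)) +
          β / (1 - β) * (-(β - 1) * (1 - a) ^ (β - 1) * ((1 - a) / (1 - y) - 1)) := by
        have hκ : 0 ≤ β / (1 - β) := div_nonneg hβ₀.le (by linarith)
        gcongr
    _ = β * (y ^ (β - 1) * (y / a - 1)) + β * ((1 - a) ^ (β - 1) * ((1 - a) / (1 - y) - 1)) := by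
        field_simp; ring
    _ ≤ y⁻¹ * (y / a - 1) + (1 - a) ^ (β - 1) * ((1 - a) / (1 - y) - 1) := by
        gcongr ?_ + ?_
        · nlinarith [mul_nonneg (rpow_nonneg hy₀.le (β - 1)) hya]
        · nlinarith [mul_nonneg h1a hyaa]
    _ = (a⁻¹ - y⁻¹) + (1 - a) ^ (β - 1) * ((y - a) / (1 - y)) := by
        field_simp; ring

theorem tsallisInvResponse_sub_le_two_mul_sub_div_sq (hβ : β ∈ Ioo 0 1) {m a y : ℝ} (hm : 0 < m)
    (ha : m ≤ a) (hay : a ≤ y) (hy : y ≤ 1 - m) :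
    tsallisInvResponse β a - tsallisInvResponse β y ≤ 2 * (y - a) / m ^ 2 := by
  have ha₀ : 0 < a := hm.trans_le ha
  have h1a : m ≤ 1 - a := by linarith
  have hya : 0 ≤ y - a := by linarith
  have hinv : a⁻¹ - y⁻¹ ≤ (y - a) / m ^ 2 := by
    rw [inv_sub_inv ha₀.ne' (ha₀.trans_le hay).ne', sq]
    gcongr
    · linarith
  have hpow : (1 - a) ^ (β - 1) ≤ m⁻¹ := by
    calc (1 - a) ^ (β - 1) ≤ (1 - a) ^ (-1 : ℝ) :=
          rpow_le_rpow_of_exponent_ge (hm.trans_le h1a) (by linarith) (by linarith [hβ.1])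
      _ ≤ m⁻¹ := by rw [rpow_neg_one]; gcongr
  calc _ ≤ (a⁻¹ - y⁻¹) + (1 - a) ^ (β - 1) * ((y - a) / (1 - y)) :=
        tsallisInvResponse_sub_le hβ ha₀ hay (by linarith)
    _ ≤ (y - a) / m ^ 2 + m⁻¹ * ((y - a) / m) := by
        gcongr
        · exact div_nonneg hya (by linarith)
        · linarith
    _ = 2 * (y - a) / m ^ 2 := by field_simp; ring

theorem tsallisInvResponse_sub_le_of_near_half (hβ : β ∈ Ioo 0 1) {c δ : ℝ} (hc₀ : 0 ≤ c)
    (hc : c ≤ 1 / 4) (hδ : 0 < δ) (hδ₁ : δ ≤ 1) :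
    tsallisInvResponse β (1 / (2 * (1 + δ))) - tsallisInvResponse β (1 / 2 + c) ≤
      32 * c + 16 * δ := by
  have ha : 1 / 4 ≤ 1 / (2 * (1 + δ)) := by
    rw [div_le_div_iff₀ (by norm_num) (by positivity)]; linarith
  have hay : 1 / (2 * (1 + δ)) ≤ 1 / 2 + c := by
    rw [div_le_iff₀ (by positivity)]; nlinarith
  have hgap : 1 / 2 + c - 1 / (2 * (1 + δ)) ≤ c + δ / 2 := by
    have : 1 / 2 - δ / 2 ≤ 1 / (2 * (1 + δ)) := by
      rw [le_div_iff₀ (by positivity)]; nlinarith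
    linarith
  calc _ ≤ 2 * (1 / 2 + c - 1 / (2 * (1 + δ))) / (1 / 4) ^ 2 :=
        tsallisInvResponse_sub_le_two_mul_sub_div_sq hβ (by norm_num) ha hay (by linarith)
    _ ≤ 2 * (c + δ / 2) / (1 / 4) ^ 2 := by gcongr
    _ = 32 * c + 16 * δ := by ring

theorem tsallisInvResponse_sub_le_of_near_one (hβ : β ∈ Ioo 0 1) {c δ : ℝ} (hc : 0 ≤ c)
    (hδ : 0 < δ) (hδ₁ : δ ≤ 1) :
    tsallisInvResponse β (1 / (1 + δ)) - tsallisInvResponse β ((1 + c) / (1 + c + δ)) ≤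
      δ + c * (δ / 2) ^ (β - 1) := by
  have hay : 1 / (1 + δ) ≤ (1 + c) / (1 + c + δ) := by
    rw [div_le_div_iff₀ (by positivity) (by positivity)]; nlinarith
  have hy : (1 + c) / (1 + c + δ) < 1 := by rw [div_lt_one (by positivity)]; linarith
  have hinv : (1 / (1 + δ))⁻¹ - ((1 + c) / (1 + c + δ))⁻¹ ≤ δ := by
    rw [one_div, inv_inv, inv_div]
    linarith [(one_le_div (by positivity : (0:ℝ) < 1 + c)).2 (by linarith : 1 + c ≤ 1 + c + δ)]
  have hratio : ((1 + c) / (1 + c + δ) - 1 / (1 + δ)) / (1 - (1 + c) / (1 + c + δ)) ≤ c := by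
    rw [div_le_iff₀ (by linarith)]
    field_simp
    nlinarith [mul_nonneg hc (sq_nonneg δ)]
  have hpow : (1 - 1 / (1 + δ)) ^ (β - 1) ≤ (δ / 2) ^ (β - 1) := by
    refine rpow_le_rpow_of_nonpos (by positivity) ?_ (by linarith [hβ.2])
    rw [one_sub_div (by positivity), add_sub_cancel_left, div_le_div_iff₀ (by norm_num) (by positivity)]
    nlinarith
  calc _ ≤ _ := tsallisInvResponse_sub_le hβ (by positivity) hay hy
    _ ≤ δ + (δ / 2) ^ (β - 1) * c := by gcongr
    _ = _ := by ring

theorem continuous_tsallisReg (hβ : 0 ≤ β) : Continuous (tsallisReg β) := by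
  unfold tsallisReg
  have := continuous_rpow_const (q := β) hβ
  fun_prop

theorem hasDerivAt_tsallisReg {x : ℝ} (hx : x ∈ Ioo 0 1) :
    HasDerivAt (tsallisReg β) (-tsallisInvResponse β x) x := by
  have hx₁ : 1 - x ≠ 0 := (sub_pos.2 hx.2).ne'
  have hpow := hasDerivAt_rpow_const (p := β) (Or.inl hx.1.ne')
  have hpow' := ((hasDerivAt_rpow_const (p := β) (Or.inl hx₁)).comp x
    ((hasDerivAt_id x).const_sub 1))
  refine (((hpow.const_sub 1).div_const (1 - β)).add
    ((hpow'.const_sub 1).div_const (1 - β))).congr_deriv ?_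
  unfold tsallisInvResponse
  field_simp
  ring

theorem tsallisInvResponse_antitoneOn (hβ : β ∈ Ioo 0 1) :
    AntitoneOn (tsallisInvResponse β) (Ioo 0 1) := by
  intro a ha b hb hab
  have hexp : β - 1 ≤ 0 := by linarith [hβ.2]
  unfold tsallisInvResponse
  gcongr ?_ * (?_ - ?_)
  · exact div_nonneg hβ.1.le (by linarith [hβ.2])
  · exact rpow_le_rpow_of_nonpos ha.1 hab hexp
  · exact rpow_le_rpow_of_nonpos (by linarith [hb.2]) (by linarith) hexp

theorem isMinOn_tsallisInvResponse (hβ : β ∈ Ioo 0 1) {x : ℝ} (hx : x ∈ Ioo 0 1) :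
    IsMinOn (fun z => z * tsallisInvResponse β x + tsallisReg β z) (Icc 0 1) x := by
  set f := fun z => z * tsallisInvResponse β x + tsallisReg β z
  have hcont : Continuous f := by have := continuous_tsallisReg hβ.1.le; fun_prop
  have hderiv : ∀ z ∈ Ioo 0 1,
      HasDerivAt f (tsallisInvResponse β x - tsallisInvResponse β z) z := fun z hz =>
    ((hasDerivAt_mul_const _).add (hasDerivAt_tsallisReg hz)).congr_deriv (by ring)
  have hIoo₁ : Ioo 0 x ⊆ Ioo 0 1 := Ioo_subset_Ioo_right hx.2.le
  have hIoo₂ : Ioo x 1 ⊆ Ioo 0 1 := Ioo_subset_Ioo_left hx.1.le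
  refine isMinOn_Icc_of_deriv hcont.continuousAt hcont.continuousAt hcont.continuousAt
    (fun z hz => (hderiv z (hIoo₁ hz)).differentiableAt.differentiableWithinAt)
    (fun z hz => (hderiv z (hIoo₂ hz)).differentiableAt.differentiableWithinAt)
    (fun z hz => ?_) (fun z hz => ?_)
  · rw [(hderiv z (hIoo₁ hz)).deriv, sub_nonpos]
    exact tsallisInvResponse_antitoneOn hβ (hIoo₁ hz) hx hz.2.le
  · rw [(hderiv z (hIoo₂ hz)).deriv, sub_nonneg]
    exact tsallisInvResponse_antitoneOn hβ hx (hIoo₂ hz) hz.1.le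

theorem tsallisInvResponse_eq_of_isMinOn {E x : ℝ} (hx : x ∈ Ioo 0 1)
    (hmin : IsMinOn (fun z => z * E + tsallisReg β z) (Icc 0 1) x) :
    tsallisInvResponse β x = E := by
  have hloc : IsLocalMin (fun z => z * E + tsallisReg β z) x :=
    hmin.isLocalMin (Icc_mem_nhds hx.1 hx.2)
  have := hloc.hasDerivAt_eq_zero ((hasDerivAt_mul_const E).add (hasDerivAt_tsallisReg hx))
  linarith

end Tsallis

namespace IsResponseFunction

variable {β : ℝ} {R F : ℝ → ℝ}

theorem isMinOn (hF : IsResponseFunction R F) (E : ℝ) :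
    IsMinOn (fun z => z * E + R z) (Icc 0 1) (F E) := isMinOn_iff.2 fun z hz => by
  rcases eq_or_ne z (F E) with rfl | hne
  · exact le_rfl
  · exact ((hF E).2 z hz hne).le

theorem eq_of_isMinOn (hF : IsResponseFunction R F) {E x : ℝ} (hx : x ∈ Icc 0 1)
    (hmin : IsMinOn (fun z => z * E + R z) (Icc 0 1) x) : F E = x := by
  by_contra hne
  exact (hmin (hF E).1).not_gt ((hF E).2 x hx (Ne.symm hne))

theorem antitone (hF : IsResponseFunction R F) : Antitone F := by
  intro E₁ E₂ hE
  rcases hE.eq_or_lt with rfl | hlt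
  · exact le_rfl
  have h₁ : F E₁ * E₁ + R (F E₁) ≤ F E₂ * E₁ + R (F E₂) := hF.isMinOn E₁ (hF E₂).1
  have h₂ : F E₂ * E₂ + R (F E₂) ≤ F E₁ * E₂ + R (F E₁) := hF.isMinOn E₂ (hF E₁).1
  by_contra! h
  nlinarith [mul_pos (sub_pos.2 h) (sub_pos.2 hlt)]

theorem apply_tsallisInvResponse (hF : IsResponseFunction (tsallisReg β) F)
    (hβ : β ∈ Ioo 0 1) {x : ℝ} (hx : x ∈ Ioo 0 1) : F (tsallisInvResponse β x) = x :=
  hF.eq_of_isMinOn (Ioo_subset_Icc_self hx) (isMinOn_tsallisInvResponse hβ hx)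

theorem le_apply_sub (hF : IsResponseFunction (tsallisReg β) F) (hβ : β ∈ Ioo 0 1)
    {a y E D : ℝ} (ha : 0 < a) (hy : y ∈ Ioo 0 1) (haE : a ≤ F E)
    (hD₀ : 0 ≤ D) (hD : tsallisInvResponse β a - tsallisInvResponse β y ≤ D) :
    y ≤ F (E - D) := by
  rcases (hF E).1.2.lt_or_eq with hlt | heq
  · have hFE : F E ∈ Ioo 0 1 := ⟨ha.trans_le haE, hlt⟩
    have hE : tsallisInvResponse β (F E) = E :=
      tsallisInvResponse_eq_of_isMinOn hFE (hF.isMinOn E)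
    have hGa : tsallisInvResponse β (F E) ≤ tsallisInvResponse β a :=
      tsallisInvResponse_antitoneOn hβ ⟨ha, haE.trans_lt hlt⟩ hFE haE
    calc y = F (tsallisInvResponse β y) := (hF.apply_tsallisInvResponse hβ hy).symm
      _ ≤ F (E - D) := hF.antitone (by linarith)
  · calc y ≤ F E := heq ▸ hy.2.le
      _ ≤ F (E - D) := hF.antitone (by linarith)

theorem le_apply_sub_of_near_one (hF : IsResponseFunction (tsallisReg β) F)
    (hβ : β ∈ Ioo 0 1) {c δ E D : ℝ} (hc : 0 ≤ c) (hδ : 0 < δ) (hδ₁ : δ ≤ 1)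
    (hD : δ + c * (δ / 2) ^ (β - 1) ≤ D) (hE : 1 / (1 + δ) ≤ F E) :
    (1 + c) / (1 + c + δ) ≤ F (E - D) := by
  have hy : (1 + c) / (1 + c + δ) < 1 := by rw [div_lt_one (by positivity)]; linarith
  have hD₀ : 0 ≤ D := le_trans (by positivity) hD
  exact hF.le_apply_sub hβ (by positivity) ⟨by positivity, hy⟩ hE hD₀
    ((tsallisInvResponse_sub_le_of_near_one hβ hc hδ hδ₁).trans hD)

theorem le_apply_sub_of_near_half (hF : IsResponseFunction (tsallisReg β) F)
    (hβ : β ∈ Ioo 0 1) {c δ E D : ℝ} (hc₀ : 0 ≤ c) (hc : c ≤ 1 / 4) (hδ : 0 < δ) (hδ₁ : δ ≤ 1)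
    (hD : 32 * c + 16 * δ ≤ D) (hE : 1 / (2 * (1 + δ)) ≤ F E) :
    1 / 2 + c ≤ F (E - D) :=
  hF.le_apply_sub hβ (by positivity) ⟨by positivity, by linarith⟩ hE (by linarith)
    ((tsallisInvResponse_sub_le_of_near_half hβ hc₀ hc hδ hδ₁).trans hD)

end IsResponseFunction

theorem eventually_add_mul_rpow_le_div {β c T : ℝ} (hβ : 0 < β) (hT : 0 < T) :
    ∀ᶠ δ in 𝓝[>] 0, δ + c * (δ / 2) ^ (β - 1) ≤ T / δ := by
  have hlim : Tendsto (fun δ : ℝ => δ ^ 2 + 2 * c * (δ / 2) ^ β) (𝓝 0) (𝓝 0) := by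
    have hpow := continuous_rpow_const (q := β) hβ.le
    have hcont : Continuous fun δ : ℝ => δ ^ 2 + 2 * c * (δ / 2) ^ β := by fun_prop
    simpa [zero_rpow hβ.ne'] using hcont.tendsto 0
  filter_upwards [self_mem_nhdsWithin, nhdsWithin_le_nhds (hlim.eventually_le_const hT)]
    with δ (hδ : 0 < δ) hsmall
  rw [le_div_iff₀ hδ]
  calc (δ + c * (δ / 2) ^ (β - 1)) * δ = δ ^ 2 + 2 * c * (δ / 2) ^ β := by
        rw [rpow_sub_one (by positivity)]; field_simp
    _ ≤ T := hsmall

theorem tsallis_main_assumption_general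
    (β : ℝ) (hβ : β ∈ Set.Ioo (0 : ℝ) 1)
    (F : ℝ → ℝ)
    (hF : ∀ E : ℝ, F E ∈ Set.Icc (0 : ℝ) 1 ∧
      ∀ z ∈ Set.Icc (0 : ℝ) 1, z ≠ F E →
        F E * E + ((1 - F E ^ β) / (1 - β) + (1 - (1 - F E) ^ β) / (1 - β)) <
          z * E + ((1 - z ^ β) / (1 - β) + (1 - (1 - z) ^ β) / (1 - β)))
    (L : ℝ) (hL : 0 < L)
    (hc1 : 0 < 1 / 2 - F (1 / (20 * L))) :
    (∀ x ∈ Set.Ioo (0 : ℝ) 1,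
      F ((β / (1 - β)) * (x ^ (β - 1) - (1 - x) ^ (β - 1))) = x) ∧
    ∃ δ' c2 : ℝ, 0 < δ' ∧ 0 < c2 ∧
      ∀ δ : ℝ, 0 < δ → δ ≤ δ' → ∀ E : ℝ,
        (1 / (1 + δ) ≤ F E →
          (1 + (1 / 2 : ℝ)) / (1 + (1 / 2 : ℝ) + δ) ≤
            F (E - (1 / 2 - F (1 / (20 * L))) ^ 2 / (30 * L * δ))) ∧
        (1 / (2 * (1 + δ)) ≤ F E →
          1 / 2 + c2 ≤
            F (E - (1 / 2 : ℝ) * (1 / 2 - F (1 / (20 * L))) ^ 2 / (120 * L) +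
              δ / (4 * L))) := by
  have hresp : IsResponseFunction (tsallisReg β) F := hF
  set c1 := 1 / 2 - F (1 / (20 * L))
  set K := c1 ^ 2 / (240 * L)
  have hK : 0 < K := by positivity
  have hlin : Tendsto (fun δ : ℝ => 16 * δ + δ / (4 * L)) (𝓝 0) (𝓝 0) :=
    (by fun_prop : Continuous fun δ : ℝ => 16 * δ + δ / (4 * L)).tendsto' 0 0 (by simp)
  have hsmall : ∀ᶠ δ in 𝓝[>] 0, δ ≤ 1 ∧ δ + 1 / 2 * (δ / 2) ^ (β - 1) ≤ c1 ^ 2 / (30 * L) / δ ∧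
      16 * δ + δ / (4 * L) ≤ K / 2 :=
    ((eventually_le_nhds one_pos).filter_mono nhdsWithin_le_nhds).and
      ((eventually_add_mul_rpow_le_div hβ.1 (by positivity)).and
        ((hlin.eventually_le_const (half_pos hK)).filter_mono nhdsWithin_le_nhds))
  obtain ⟨δ', hδ', hδ'small⟩ := mem_nhdsGT_iff_exists_Ioc_subset.1 hsmall
  have hc2 : min (1 / 4) (K / 64) ≤ K / 64 := min_le_right _ _
  refine ⟨fun x hx => hresp.apply_tsallisInvResponse hβ hx, δ', min (1 / 4) (K / 64), hδ',
    by positivity, fun δ hδ hδδ' E => ?_⟩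
  obtain ⟨hδ₁, hnear_one, hnear_half⟩ := hδ'small ⟨hδ, hδδ'⟩
  refine ⟨fun hE => ?_, fun hE => ?_⟩
  · rw [← div_div]
    exact hresp.le_apply_sub_of_near_one hβ (by norm_num) hδ hδ₁ hnear_one hE
  · rw [sub_add, show (1 / 2 : ℝ) * c1 ^ 2 / (120 * L) = K by ring]
    exact hresp.le_apply_sub_of_near_half hβ (by positivity) (min_le_left _ _) hδ hδ₁
      (by linarith [div_pos hδ (by positivity : (0 : ℝ) < 4 * L)]) hE

/-- the main assumption holds for the negative Tsallis entropy regularizer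
`R(x) = (1 − x^β)/(1−β) + (1 − (1−x)^β)/(1−β)` with parameter `β ∈ (0,1)`. Here `F E` is
the unique minimizer over `[0,1]` of `x ↦ x·E + R(x)`, assumed `L`-Lipschitz, and
`c1 := 1/2 − F(1/(20L)) > 0`. Part (a): the inverse formula for `F`; part (b): with
`c3 = 1/2` there exist `δ', c2 > 0` making items (1) and (2) hold. -/
theorem tsallis_main_assumption
    (β : ℝ) (hβ : β ∈ Set.Ioo (0 : ℝ) 1)
    (F : ℝ → ℝ)
    (hF : ∀ E : ℝ, F E ∈ Set.Icc (0 : ℝ) 1 ∧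
      ∀ z ∈ Set.Icc (0 : ℝ) 1, z ≠ F E →
        F E * E + ((1 - F E ^ β) / (1 - β) + (1 - (1 - F E) ^ β) / (1 - β)) <
          z * E + ((1 - z ^ β) / (1 - β) + (1 - (1 - z) ^ β) / (1 - β)))
    (L : ℝ) (hL : 0 < L)
    (hLip : ∀ a b : ℝ, |F a - F b| ≤ L * |a - b|)
    (hc1 : 0 < 1 / 2 - F (1 / (20 * L))) :
    (∀ x ∈ Set.Ioo (0 : ℝ) 1,
      F ((β / (1 - β)) * (x ^ (β - 1) - (1 - x) ^ (β - 1))) = x) ∧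
    ∃ δ' c2 : ℝ, 0 < δ' ∧ 0 < c2 ∧
      ∀ δ : ℝ, 0 < δ → δ ≤ δ' → ∀ E : ℝ,
        (1 / (1 + δ) ≤ F E →
          (1 + (1 / 2 : ℝ)) / (1 + (1 / 2 : ℝ) + δ) ≤
            F (E - (1 / 2 - F (1 / (20 * L))) ^ 2 / (30 * L * δ))) ∧
        (1 / (2 * (1 + δ)) ≤ F E →
          1 / 2 + c2 ≤
            F (E - (1 / 2 : ℝ) * (1 / 2 - F (1 / (20 * L))) ^ 2 / (120 * L) +
              δ / (4 * L))) :=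
  tsallis_main_assumption_general β hβ F hF L hL hc1
end
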